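/- Let ψ₁ be the word length on ℤⁿ with Gromov form ⟨·,·⟩_{ψ₁}. For g ∈ ℤⁿ with g_j ≠ 0, let g_{[j]}⁻ = g − sgn(g_j) e_j and w_{g,j} = δ_g − δ_{g_{[j]}⁻}. Then ⟨w_{g,j} − u_j(g_j), w_{g,j} − u_j(g_j)⟩_{ψ₁} = 0, where u_j(ℓ) = δ_{ℓe_j} − δ_{(ℓ−sgn(ℓ))e_j}; i.e. w_{g,j} equals u_j(g_j) modulo the kernel of the Gromov form. -/

import Mathlib

/-! With `‖·‖₁` the word length, `⟨δ_g, δ_h⟩ = (‖g‖₁ + ‖h‖₁ - ‖h - g‖₁) / 2`. The vector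
`w_{g,j} - u_j(g_j)` is the second difference `δ_{p+x+y} - δ_{p+y} - δ_{p+x} + δ_p` with
`p = (g_j - sgn g_j) e_j`, `x = sgn(g_j) e_j` and `y = g - g_j e_j`. Its coefficients sum to zero,
so the terms `‖g‖₁`, `‖h‖₁` cancel from its Gromov norm, leaving the parallelogram defect
`2‖x‖₁ + 2‖y‖₁ - ‖x + y‖₁ - ‖x - y‖₁`, which vanishes because `x` and `y` have disjoint supports. -/

noncomputable def gromovZn (n : ℕ) (g h : Fin n → ℤ) : ℝ :=
  (((∑ j, |g j|) + (∑ j, |h j|) - (∑ j, |(h - g) j|) : ℤ) : ℝ) / 2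

noncomputable def gromovFormZn (n : ℕ) (a b : (Fin n → ℤ) →₀ ℝ) : ℝ :=
  ∑ g ∈ a.support, ∑ h ∈ b.support, a g * b h * gromovZn n g h

noncomputable def uZn (n : ℕ) (j : Fin n) (ℓ : ℤ) : (Fin n → ℤ) →₀ ℝ :=
  Finsupp.single (Pi.single j ℓ) 1 - Finsupp.single (Pi.single j (ℓ - ℓ.sign)) 1

/-- w_{g,j} = δ_g − δ_{g_{[j]}⁻} where g_{[j]}⁻ = g − sgn(g_j) e_j. -/
noncomputable def wZn (n : ℕ) (g : Fin n → ℤ) (j : Fin n) : (Fin n → ℤ) →₀ ℝ :=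
  Finsupp.single g 1 - Finsupp.single (g - Pi.single j (g j).sign) 1

section L1Norm

variable {ι : Type*} [Fintype ι]

def l1Norm (g : ι → ℤ) : ℤ := ∑ i, |g i|

@[simp]
lemma l1Norm_zero : l1Norm (0 : ι → ℤ) = 0 := by
  simp [l1Norm]

lemma l1Norm_neg (g : ι → ℤ) : l1Norm (-g) = l1Norm g := by
  simp [l1Norm]

lemma l1Norm_sub_comm (x y : ι → ℤ) : l1Norm (x - y) = l1Norm (y - x) := by
  rw [← neg_sub, l1Norm_neg]

lemma l1Norm_add_of_disjoint {x y : ι → ℤ}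
    (h : ∀ i, x i = 0 ∨ y i = 0) : l1Norm (x + y) = l1Norm x + l1Norm y := by
  simp only [l1Norm, ← Finset.sum_add_distrib, Pi.add_apply]
  refine Finset.sum_congr rfl fun i _ => ?_
  rcases h i with h | h <;> simp [h]

lemma l1Norm_sub_of_disjoint {x y : ι → ℤ}
    (h : ∀ i, x i = 0 ∨ y i = 0) : l1Norm (x - y) = l1Norm x + l1Norm y := by
  rw [sub_eq_add_neg, l1Norm_add_of_disjoint, l1Norm_neg]
  simpa using h

end L1Norm

section GromovForm

variable {n : ℕ}

lemma gromovZn_eq_l1Norm (g h : Fin n → ℤ) :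
    gromovZn n g h = ((l1Norm g + l1Norm h - l1Norm (h - g) : ℤ) : ℝ) / 2 := rfl

lemma gromovFormZn_eq_sum (a b : (Fin n → ℤ) →₀ ℝ) :
    gromovFormZn n a b = a.sum fun g r => b.sum fun h s => r * s * gromovZn n g h := rfl

lemma gromovFormZn_sub_left (a a' b : (Fin n → ℤ) →₀ ℝ) :
    gromovFormZn n (a - a') b = gromovFormZn n a b - gromovFormZn n a' b := by
  simp only [gromovFormZn_eq_sum]
  exact Finsupp.sum_sub_index fun _ _ _ => by
    simp only [Finsupp.sum, ← Finset.sum_sub_distrib, sub_mul]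

lemma gromovFormZn_sub_right (a b b' : (Fin n → ℤ) →₀ ℝ) :
    gromovFormZn n a (b - b') = gromovFormZn n a b - gromovFormZn n a b' := by
  simp only [gromovFormZn_eq_sum, ← Finsupp.sum_sub]
  exact Finsupp.sum_congr fun _ _ => Finsupp.sum_sub_index fun _ _ _ => by ring

lemma gromovFormZn_single_single (g h : Fin n → ℤ) (r s : ℝ) :
    gromovFormZn n (Finsupp.single g r) (Finsupp.single h s) = r * s * gromovZn n g h := by
  simp [gromovFormZn_eq_sum, Finsupp.sum_single_index]

end GromovForm

noncomputable def parallelogramVec {G : Type*} [AddCommGroup G] (p x y : G) : G →₀ ℝ :=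
  (Finsupp.single (p + x + y) 1 - Finsupp.single (p + y) 1) -
    (Finsupp.single (p + x) 1 - Finsupp.single p 1)

lemma gromovFormZn_parallelogramVec {n : ℕ} (p x y : Fin n → ℤ) :
    gromovFormZn n (parallelogramVec p x y) (parallelogramVec p x y) =
      ((2 * l1Norm x + 2 * l1Norm y - l1Norm (x + y) - l1Norm (x - y) : ℤ) : ℝ) := by
  simp only [parallelogramVec, gromovFormZn_sub_left, gromovFormZn_sub_right,
    gromovFormZn_single_single, gromovZn_eq_l1Norm, add_assoc, add_sub_add_left_eq_sub, add_sub_cancel_right, sub_add_cancel_right,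
    sub_add_cancel_left, add_sub_cancel_left, sub_self, l1Norm_neg, l1Norm_zero]
  rw [l1Norm_sub_comm y x]
  push_cast
  ring

lemma wZn_sub_uZn_eq_parallelogramVec (n : ℕ) (g : Fin n → ℤ) (j : Fin n) :
    wZn n g j - uZn n j (g j) = parallelogramVec (Pi.single j (g j - (g j).sign))
      (Pi.single j (g j).sign) (g - (Pi.single j (g j) : Fin n → ℤ)) := by
  have hx : (Pi.single j (g j - (g j).sign) + Pi.single j (g j).sign : Fin n → ℤ) =
      Pi.single j (g j) := by
    rw [← Pi.single_add, sub_add_cancel]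
  have hy : Pi.single j (g j - (g j).sign) + (g - (Pi.single j (g j) : Fin n → ℤ)) =
      g - Pi.single j (g j).sign := by
    rw [Pi.single_sub]
    abel
  rw [parallelogramVec, hx, hy, add_sub_cancel, wZn, uZn]

theorem wZn_eq_uZn_mod_kernel_general (n : ℕ) (g : Fin n → ℤ) (j : Fin n) :
    gromovFormZn n (wZn n g j - uZn n j (g j)) (wZn n g j - uZn n j (g j)) = 0 := by
  have hdisj : ∀ i, (Pi.single j (g j).sign : Fin n → ℤ) i = 0 ∨
      (g - (Pi.single j (g j) : Fin n → ℤ)) i = 0 := by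
    intro i
    rcases eq_or_ne i j with rfl | hi
    · simp
    · simp [hi]
  rw [wZn_sub_uZn_eq_parallelogramVec, gromovFormZn_parallelogramVec,
    l1Norm_add_of_disjoint hdisj, l1Norm_sub_of_disjoint hdisj]
  push_cast
  ring

/-- w_{g,j} = u_j(g_j) modulo the kernel of the Gromov form:
the difference has zero Gromov norm. -/
theorem wZn_eq_uZn_mod_kernel (n : ℕ) (g : Fin n → ℤ) (j : Fin n) (hg : g j ≠ 0) :
    gromovFormZn n (wZn n g j - uZn n j (g j)) (wZn n g j - uZn n j (g j)) = 0 :=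
  wZn_eq_uZn_mod_kernel_general n g j
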